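/- arXiv:1509.05182 — 3 statements merged into one kernel-verified Lean document; each statement's English description precedes it below -/
import Mathlib

section
/- Suppose −1 < α < 0, 0 ≤ M ≤ N, and q < 0. Then an admissible u is a global minimizer of ∫_Ω H_TF if and only if there exists a measurable set U ⊆ Ω with |U| = (1/2)·(1 + m/n)·|Ω| such that u = (√n, 0, 0)·χ_U + (0, 0, √n)·χ_{Ω∖U} almost everywhere on Ω. -/
open MeasureTheory

noncomputable section

abbrev E3 := EuclideanSpace ℝ (Fin 3)

/-- The sign `s`: `1` if `α ≥ 0`, `-1` otherwise. -/
def sgn' (α : ℝ) : ℝ := if 0 ≤ α then 1 else -1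

/-- Thomas–Fermi energy density; coordinates: `v 0 = u₁`, `v 1 = u₀`, `v 2 = u₋₁`. -/
def HTF (α q : ℝ) (v : Fin 3 → ℝ) : ℝ :=
  (1/2) * (v 0 ^ 2 + v 1 ^ 2 + v 2 ^ 2) ^ 2
    + (α/2) * (2 * v 1 ^ 2 * (v 0 - sgn' α * v 2) ^ 2 + (v 0 ^ 2 - v 2 ^ 2) ^ 2)
    + q * (v 0 ^ 2 + v 2 ^ 2)

/-- Admissibility: `u ∈ L⁴(Ω; ℝ³)`, nonnegative components a.e. on `Ω`,
with prescribed total mass `N` and total magnetization `M`. -/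
structure Admissible (Ω : Set E3) (N M : ℝ) (u : E3 → Fin 3 → ℝ) : Prop where
  memL4 : MemLp u 4 (volume.restrict Ω)
  nonneg : ∀ᵐ x ∂(volume.restrict Ω), ∀ i, 0 ≤ u x i
  mass : ∫ x in Ω, (u x 0 ^ 2 + u x 1 ^ 2 + u x 2 ^ 2) = N
  mag : ∫ x in Ω, (u x 0 ^ 2 - u x 2 ^ 2) = M

/-- `u` is a global minimizer of `∫_Ω H_TF` among admissible functions. -/
def IsMinimizer (Ω : Set E3) (α q N M : ℝ) (u : E3 → Fin 3 → ℝ) : Prop :=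
  Admissible Ω N M u ∧
    ∀ v : E3 → Fin 3 → ℝ, Admissible Ω N M v →
      ∫ x in Ω, HTF α q (u x) ≤ ∫ x in Ω, HTF α q (v x)

open Metric
open scoped ENNReal

/-! For `α < 0` completing squares gives
`H_TF = tfExcess + ((1 + α) n + q) ρ - (1 + α) n² / 2` with `ρ = u₁² + u₀² + u₋₁²`, and for
`-1 < α < 0`, `q < 0` the excess `(1 + α)/2 (ρ - n)² - α/2 (u₀² - 2 u₁ u₋₁)² - q u₀²` is a sum of
nonnegative squares vanishing, for `u ≥ 0`, only at `(√n, 0, 0)` and `(0, 0, √n)`. Since `∫ ρ = N`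
is fixed, minimising `∫ H_TF` means minimising `∫ tfExcess ≥ 0`. The value `0` is attained by the
mixed state equal to `(√n, 0, 0)` on a set `U` and to `(0, 0, √n)` on `Ω \ U`, where the
magnetisation constraint forces `|U| = (1 + m/n) |Ω| / 2`; such a `U ⊆ Ω` exists because
`r ↦ |Ω ∩ B(0, r)|` is continuous. Hence the minimisers are exactly the admissible states on which
the excess vanishes a.e., i.e. these mixed states. -/

theorem Continuous.of_dist_le_dist {α β γ : Type*} [PseudoMetricSpace α] [PseudoMetricSpace β]
    [PseudoMetricSpace γ] {f : α → β} {g : α → γ} (hg : Continuous g)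
    (h : ∀ x y, dist (f x) (f y) ≤ dist (g x) (g y)) : Continuous f := by
  refine Metric.continuous_iff.mpr fun x ε hε => ?_
  obtain ⟨δ, hδ, hgδ⟩ := Metric.continuous_iff.mp hg x ε hε
  exact ⟨δ, hδ, fun y hy => (h y x).trans_lt (hgδ y hy)⟩

section HaarBalls

variable {E : Type*} [NormedAddCommGroup E] [NormedSpace ℝ E] [MeasurableSpace E] [BorelSpace E]
  [FiniteDimensional ℝ E] [Nontrivial E] (μ : Measure E) [μ.IsAddHaarMeasure]

theorem measureReal_ball_zero (r : ℝ) :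
    μ.real (ball 0 r) = max r 0 ^ Module.finrank ℝ E * μ.real (ball 0 1) := by
  rcases le_or_gt 0 r with hr | hr
  · rw [measureReal_def, Measure.addHaar_ball μ 0 hr, ENNReal.toReal_mul,
      ENNReal.toReal_ofReal (by positivity), max_eq_left hr, measureReal_def]
  · rw [ball_eq_empty.mpr hr.le, max_eq_right hr.le, zero_pow Module.finrank_pos.ne']
    simp

theorem continuous_measureReal_inter_ball {s : Set E} (hs : MeasurableSet s) :
    Continuous fun r => μ.real (s ∩ ball 0 r) := by
  have hball : Continuous fun r => μ.real (ball (0 : E) r) := by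
    have : Continuous fun r : ℝ => max r 0 ^ Module.finrank ℝ E * μ.real (ball (0 : E) 1) := by
      fun_prop
    exact this.congr fun r => (measureReal_ball_zero μ r).symm
  -- the increments of `r ↦ μ (s ∩ ball 0 r)` are dominated by those of `r ↦ μ (ball 0 r)`
  have hincr : ∀ r r', r ≤ r' → 0 ≤ μ.real (s ∩ ball 0 r') - μ.real (s ∩ ball 0 r) ∧
      μ.real (s ∩ ball 0 r') - μ.real (s ∩ ball 0 r) ≤
        μ.real (ball (0 : E) r') - μ.real (ball 0 r) := by
    intro r r' hrr'
    have hsub : ball (0 : E) r ⊆ ball 0 r' := ball_subset_ball hrr'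
    have hfin : ∀ t, μ (ball (0 : E) t) ≠ ⊤ := fun t => measure_ball_lt_top.ne
    rw [← measureReal_sdiff (Set.inter_subset_inter_right s hsub) (hs.inter measurableSet_ball)
        (measure_ne_top_of_subset Set.inter_subset_right (hfin r')),
      ← measureReal_sdiff hsub measurableSet_ball (hfin r'), ← Set.inter_sdiff_distrib_left]
    exact ⟨measureReal_nonneg, measureReal_mono Set.inter_subset_right
      (measure_ne_top_of_subset Set.sdiff_subset (hfin r'))⟩
  refine hball.of_dist_le_dist fun r r' => ?_
  rw [Real.dist_eq, Real.dist_eq]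
  rcases le_total r r' with h | h
  · obtain ⟨h₀, h₁⟩ := hincr r r' h
    rw [abs_sub_comm, abs_of_nonneg h₀, abs_sub_comm, abs_of_nonneg (h₀.trans h₁)]
    exact h₁
  · obtain ⟨h₀, h₁⟩ := hincr r' r h
    rw [abs_of_nonneg h₀, abs_of_nonneg (h₀.trans h₁)]
    exact h₁

theorem exists_subset_measureReal_eq {s : Set E} (hs : MeasurableSet s)
    (hsb : Bornology.IsBounded s) {r : ℝ} (hr₀ : 0 ≤ r) (hr : r ≤ μ.real s) :
    ∃ t ⊆ s, MeasurableSet t ∧ μ.real t = r := by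
  obtain ⟨R, hR₀, hsR⟩ := hsb.subset_ball_lt 0 0
  have hr' : r ∈ Set.Icc (μ.real (s ∩ ball 0 0)) (μ.real (s ∩ ball 0 R)) := by
    rw [ball_zero, Set.inter_empty, measureReal_empty, Set.inter_eq_self_of_subset_left hsR]
    exact ⟨hr₀, hr⟩
  obtain ⟨ρ, -, hρ⟩ := intermediate_value_Icc hR₀.le
    (continuous_measureReal_inter_ball μ hs).continuousOn hr'
  exact ⟨s ∩ ball 0 ρ, Set.inter_subset_left, hs.inter measurableSet_ball, hρ⟩

end HaarBalls

def massDensity (v : Fin 3 → ℝ) : ℝ := v 0 ^ 2 + v 1 ^ 2 + v 2 ^ 2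

def tfExcess (α q n : ℝ) (v : Fin 3 → ℝ) : ℝ :=
  (1 + α) / 2 * (massDensity v - n) ^ 2 + -α / 2 * (v 1 ^ 2 - 2 * v 0 * v 2) ^ 2 + -q * v 1 ^ 2

theorem HTF_eq_tfExcess {α : ℝ} (hα : α < 0) (q n : ℝ) (v : Fin 3 → ℝ) :
    HTF α q v = tfExcess α q n v + ((1 + α) * n + q) * massDensity v - (1 + α) / 2 * n ^ 2 := by
  simp only [HTF, tfExcess, massDensity, sgn', if_neg hα.not_ge]
  ring

theorem tfExcess_nonneg {α q : ℝ} (hα₁ : -1 ≤ α) (hα₀ : α ≤ 0) (hq : q ≤ 0) (n : ℝ)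
    (v : Fin 3 → ℝ) : 0 ≤ tfExcess α q n v := by
  have h₁ : 0 ≤ (1 + α) / 2 := by linarith
  have h₂ : 0 ≤ -α / 2 := by linarith
  have h₃ : 0 ≤ -q := by linarith
  unfold tfExcess
  positivity

theorem tfExcess_sqrt_zero_zero (α q : ℝ) {n : ℝ} (hn : 0 ≤ n) :
    tfExcess α q n ![√n, 0, 0] = 0 := by
  simp [tfExcess, massDensity, Real.sq_sqrt hn]

theorem tfExcess_zero_zero_sqrt (α q : ℝ) {n : ℝ} (hn : 0 ≤ n) :
    tfExcess α q n ![0, 0, √n] = 0 := by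
  simp [tfExcess, massDensity, Real.sq_sqrt hn]

theorem eq_or_eq_of_tfExcess_eq_zero {α q n : ℝ} (hα₁ : -1 < α) (hα₀ : α < 0) (hq : q < 0)
    {v : Fin 3 → ℝ} (hv : ∀ i, 0 ≤ v i) (h : tfExcess α q n v = 0) :
    v = ![√n, 0, 0] ∨ v = ![0, 0, √n] := by
  have h₁ : 0 < (1 + α) / 2 := by linarith
  have h₂ : 0 < -α / 2 := by linarith
  have h₃ : 0 < -q := by linarith
  unfold tfExcess at h
  rw [add_eq_zero_iff_of_nonneg (by positivity) (by positivity),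
    add_eq_zero_iff_of_nonneg (by positivity) (by positivity)] at h
  obtain ⟨⟨hρ, hspin⟩, hv₁⟩ := h
  simp only [mul_eq_zero, h₁.ne', h₂.ne', h₃.ne', false_or, pow_eq_zero_iff two_ne_zero,
    sub_eq_zero] at hρ hspin hv₁
  simp only [massDensity, hv₁] at hρ hspin
  have hv₀₂ : v 0 = 0 ∨ v 2 = 0 := by simpa using hspin.symm
  rcases hv₀₂ with hv₀ | hv₂
  · have : v 2 = √n := by simp [← hρ, hv₀, Real.sqrt_sq (hv 2)]
    right; funext i; fin_cases i <;> simp [hv₀, hv₁, this]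
  · have : v 0 = √n := by simp [← hρ, hv₂, Real.sqrt_sq (hv 0)]
    left; funext i; fin_cases i <;> simp [hv₂, hv₁, this]

instance : ENNReal.HolderTriple 4 4 2 where
  inv_add_inv_eq_inv := by
    rw [← two_mul, show (4 : ℝ≥0∞) = 2 * 2 by norm_num, ENNReal.mul_inv (by simp) (by simp),
      ← mul_assoc, ENNReal.mul_inv_cancel (by simp) (by simp), one_mul]

section Integrals

variable {X : Type*} [MeasurableSpace X] {μ : Measure X} {w : X → Fin 3 → ℝ}

theorem memLp_two_mul_eval (hw : MemLp w 4 μ) (i j : Fin 3) :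
    MemLp (fun x => w x i * w x j) 2 μ :=
  (hw.eval j).mul' (hw.eval i)

theorem memLp_two_massDensity_comp (hw : MemLp w 4 μ) :
    MemLp (fun x => massDensity (w x)) 2 μ := by
  convert ((memLp_two_mul_eval hw 0 0).add (memLp_two_mul_eval hw 1 1)).add
    (memLp_two_mul_eval hw 2 2) using 1
  funext x
  simp only [massDensity, sq, Pi.add_apply]

variable [IsFiniteMeasure μ]

theorem integrable_tfExcess_comp (hw : MemLp w 4 μ) (α q n : ℝ) :
    Integrable (fun x => tfExcess α q n (w x)) μ := by
  have hρ := ((memLp_two_massDensity_comp hw).sub (memLp_const n)).integrable_sq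
  have hspin := ((memLp_two_mul_eval hw 1 1).sub
    ((memLp_two_mul_eval hw 0 2).const_mul 2)).integrable_sq
  have hv₁ := ((hw.eval 1).mono_exponent (by norm_num)).integrable_sq
  refine (((hρ.const_mul ((1 + α) / 2)).add (hspin.const_mul (-α / 2))).add
    (hv₁.const_mul (-q))).congr (ae_of_all _ fun x => ?_)
  simp only [tfExcess, Pi.add_apply, Pi.sub_apply]
  ring

theorem integral_HTF_comp (hw : MemLp w 4 μ) {α : ℝ} (hα : α < 0) (q n : ℝ) :
    ∫ x, HTF α q (w x) ∂μ = ∫ x, tfExcess α q n (w x) ∂μ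
      + ((1 + α) * n + q) * ∫ x, massDensity (w x) ∂μ - (1 + α) / 2 * n ^ 2 * μ.real Set.univ := by
  have hρ := (memLp_two_massDensity_comp hw).integrable one_le_two
  have hsum : Integrable
      (fun x => tfExcess α q n (w x) + ((1 + α) * n + q) * massDensity (w x)) μ :=
    (integrable_tfExcess_comp hw α q n).add (hρ.const_mul _)
  simp only [HTF_eq_tfExcess hα q n]
  rw [integral_sub hsum (integrable_const _),
    integral_add (integrable_tfExcess_comp hw α q n) (hρ.const_mul _), integral_const_mul,
    integral_const, smul_eq_mul]
  ring

theorem ae_eq_or_eq_of_integral_tfExcess_eq_zero {α q n : ℝ} (hα₁ : -1 < α) (hα₀ : α < 0)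
    (hq : q < 0) (hw : MemLp w 4 μ) (hw₀ : ∀ᵐ x ∂μ, ∀ i, 0 ≤ w x i)
    (h : ∫ x, tfExcess α q n (w x) ∂μ = 0) :
    ∀ᵐ x ∂μ, w x = ![√n, 0, 0] ∨ w x = ![0, 0, √n] := by
  filter_upwards [(integral_eq_zero_iff_of_nonneg
      (fun x => tfExcess_nonneg hα₁.le hα₀.le hq.le n (w x))
      (integrable_tfExcess_comp hw α q n)).mp h, hw₀] with x hx hxnn
  exact eq_or_eq_of_tfExcess_eq_zero hα₁ hα₀ hq hxnn hx

end Integrals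

section MixedStates

variable {X : Type*}

open scoped Classical in
def mixedState (n : ℝ) (U : Set X) : X → Fin 3 → ℝ :=
  U.piecewise (fun _ => ![√n, 0, 0]) (fun _ => ![0, 0, √n])

theorem mixedState_nonneg {n : ℝ} (U : Set X) (x : X) (i : Fin 3) : 0 ≤ mixedState n U x i := by
  by_cases hx : x ∈ U <;> fin_cases i <;> simp [mixedState, hx]

variable [MeasurableSpace X] {μ : Measure X}

def IsMixedState (μ : Measure X) (n : ℝ) (U : Set X) (u : X → Fin 3 → ℝ) : Prop :=
  ∀ᵐ x ∂μ, (x ∈ U → u x = ![√n, 0, 0]) ∧ (x ∉ U → u x = ![0, 0, √n])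

open scoped Classical in
theorem isMixedState_mixedState (n : ℝ) (U : Set X) : IsMixedState μ n U (mixedState n U) :=
  ae_of_all _ fun _ => ⟨fun hx => Set.piecewise_eq_of_mem _ _ _ hx,
    fun hx => Set.piecewise_eq_of_notMem _ _ _ hx⟩

theorem memLp_mixedState [IsFiniteMeasure μ] {U : Set X} (hU : MeasurableSet U) (n : ℝ)
    (p : ℝ≥0∞) : MemLp (mixedState n U) p μ := by
  classical
  exact MemLp.piecewise hU (memLp_const _) (memLp_const _)

namespace IsMixedState

variable {n : ℝ} {U : Set X} {u : X → Fin 3 → ℝ}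

theorem integral_tfExcess (h : IsMixedState μ n U u) (hn : 0 ≤ n) (α q : ℝ) :
    ∫ x, tfExcess α q n (u x) ∂μ = 0 := by
  refine integral_eq_zero_of_ae (h.mono fun x hx => ?_)
  change tfExcess α q n (u x) = 0
  by_cases hxU : x ∈ U
  · rw [hx.1 hxU, tfExcess_sqrt_zero_zero α q hn]
  · rw [hx.2 hxU, tfExcess_zero_zero_sqrt α q hn]

theorem integral_massDensity (h : IsMixedState μ n U u) (hn : 0 ≤ n) :
    ∫ x, massDensity (u x) ∂μ = n * μ.real Set.univ := by
  rw [integral_congr_ae (g := fun _ => n), integral_const, smul_eq_mul, mul_comm]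
  refine h.mono fun x hx => ?_
  by_cases hxU : x ∈ U
  · simp [hx.1 hxU, massDensity, Real.sq_sqrt hn]
  · simp [hx.2 hxU, massDensity, Real.sq_sqrt hn]

theorem setIntegral_magnetization {Ω : Set X} (h : IsMixedState (μ.restrict Ω) n U u)
    (hΩ : μ Ω ≠ ∞) (hU : MeasurableSet U) (hUΩ : U ⊆ Ω) (hn : 0 ≤ n) :
    ∫ x in Ω, (u x 0 ^ 2 - u x 2 ^ 2) ∂μ = n * (2 * μ.real U - μ.real Ω) := by
  have : IsFiniteMeasure (μ.restrict Ω) := isFiniteMeasure_restrict.mpr hΩ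
  rw [integral_congr_ae (g := fun x => U.indicator (fun _ => 2 * n) x - n),
    integral_sub ((integrable_const _).indicator hU) (integrable_const _),
    integral_indicator_const _ hU, integral_const, smul_eq_mul, smul_eq_mul,
    measureReal_restrict_apply_univ, measureReal_restrict_apply hU,
    Set.inter_eq_self_of_subset_left hUΩ]
  · ring
  refine h.mono fun x hx => ?_
  by_cases hxU : x ∈ U
  · simp [hx.1 hxU, hxU, Real.sq_sqrt hn]; ring
  · simp [hx.2 hxU, hxU, Real.sq_sqrt hn]

end IsMixedState

theorem exists_isMixedState_of_ae {Ω : Set X} (hΩ : MeasurableSet Ω) {n : ℝ}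
    {u : X → Fin 3 → ℝ} (hu : AEMeasurable u (μ.restrict Ω))
    (h : ∀ᵐ x ∂μ.restrict Ω, u x = ![√n, 0, 0] ∨ u x = ![0, 0, √n]) :
    ∃ U ⊆ Ω, MeasurableSet U ∧ IsMixedState (μ.restrict Ω) n U u := by
  refine ⟨Ω ∩ hu.mk u ⁻¹' {![√n, 0, 0]}, Set.inter_subset_left,
    hΩ.inter (hu.measurable_mk (measurableSet_singleton _)), ?_⟩
  filter_upwards [h, hu.ae_eq_mk, ae_restrict_mem hΩ] with x hx hxmk hxΩ
  exact ⟨fun hxU => hxmk.trans hxU.2,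
    fun hxU => hx.resolve_left fun hx₁ => hxU ⟨hxΩ, hxmk.symm.trans hx₁⟩⟩

end MixedStates

theorem admissible_mixedState {Ω U : Set E3} (hU : MeasurableSet U) (hUΩ : U ⊆ Ω)
    (hΩ : volume Ω ≠ ∞) {n : ℝ} (hn : 0 ≤ n) :
    Admissible Ω (n * volume.real Ω) (n * (2 * volume.real U - volume.real Ω))
      (mixedState n U) := by
  have : IsFiniteMeasure (volume.restrict Ω) := isFiniteMeasure_restrict.mpr hΩ
  have hmixed : IsMixedState (volume.restrict Ω) n U (mixedState n U) := isMixedState_mixedState n U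
  refine ⟨memLp_mixedState hU n 4, ae_of_all _ (mixedState_nonneg U), ?_,
    hmixed.setIntegral_magnetization hΩ hU hUΩ hn⟩
  rw [← measureReal_restrict_apply_univ]
  exact hmixed.integral_massDensity hn

theorem exists_admissible_mixedState {Ω : Set E3} (hΩm : MeasurableSet Ω)
    (hΩb : Bornology.IsBounded Ω) (hΩ : 0 < volume.real Ω) {N M : ℝ} (hN : 0 < N) (hM : 0 ≤ M)
    (hMN : M ≤ N) : ∃ U, Admissible Ω N M (mixedState (N / volume.real Ω) U) := by
  obtain ⟨U, hUΩ, hU, hUvol⟩ := exists_subset_measureReal_eq volume hΩm hΩb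
    (r := (1 / 2) * (1 + M / N) * volume.real Ω) (by positivity)
    (mul_le_of_le_one_left hΩ.le (by linarith [(div_le_one hN).mpr hMN]))
  refine ⟨U, ?_⟩
  convert admissible_mixedState hU hUΩ hΩb.measure_lt_top.ne (div_nonneg hN.le hΩ.le) using 1
  · field_simp
  · rw [hUvol]
    field_simp
    ring

theorem integral_HTF_eq_of_admissible {Ω : Set E3} (hΩ : volume Ω ≠ ∞) {α : ℝ} (hα : α < 0)
    (q n : ℝ) {N M : ℝ} {v : E3 → Fin 3 → ℝ} (hv : Admissible Ω N M v) :
    ∫ x in Ω, HTF α q (v x) = (∫ x in Ω, tfExcess α q n (v x))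
      + (((1 + α) * n + q) * N - (1 + α) / 2 * n ^ 2 * volume.real Ω) := by
  have : IsFiniteMeasure (volume.restrict Ω) := isFiniteMeasure_restrict.mpr hΩ
  rw [integral_HTF_comp hv.memL4 hα q n, measureReal_restrict_apply_univ, ← hv.mass, add_sub_assoc]
  rfl

theorem isMinimizer_iff_integral_tfExcess_eq_zero {Ω : Set E3} (hΩ : volume Ω ≠ ∞)
    {α q N M : ℝ} (n : ℝ) (hα₁ : -1 ≤ α) (hα₀ : α < 0) (hq : q ≤ 0) {w u : E3 → Fin 3 → ℝ}
    (hw : Admissible Ω N M w) (hw₀ : ∫ x in Ω, tfExcess α q n (w x) = 0)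
    (hu : Admissible Ω N M u) :
    IsMinimizer Ω α q N M u ↔ ∫ x in Ω, tfExcess α q n (u x) = 0 := by
  have henergy := fun v (hv : Admissible Ω N M v) => integral_HTF_eq_of_admissible hΩ hα₀ q n hv
  have hexcess : ∀ v : E3 → Fin 3 → ℝ, 0 ≤ ∫ x in Ω, tfExcess α q n (v x) :=
    fun v => integral_nonneg fun x => tfExcess_nonneg hα₁ hα₀.le hq n (v x)
  constructor
  · rintro ⟨-, hmin⟩
    have := hmin w hw
    rw [henergy u hu, henergy w hw, hw₀] at this
    exact le_antisymm (by linarith) (hexcess u)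
  · intro hu₀
    refine ⟨hu, fun v hv => ?_⟩
    rw [henergy u hu, henergy v hv, hu₀]
    linarith [hexcess v]

/-- Ferromagnetic case `q < 0`: the minimizers are exactly the `MS+MS` mixed states. -/
theorem ferro_MS_MS
    (Ω : Set E3) (hΩm : MeasurableSet Ω) (hΩb : Bornology.IsBounded Ω)
    (hΩpos : 0 < volume Ω)
    (α q N M n m : ℝ)
    (hαl : -1 < α) (hαu : α < 0) (hN : 0 < N) (hM0 : 0 ≤ M) (hMN : M ≤ N)
    (hn : n = N / (volume Ω).toReal) (hm : m = M / (volume Ω).toReal)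
    (hq : q < 0)
    (u : E3 → Fin 3 → ℝ) (hu : Admissible Ω N M u) :
    IsMinimizer Ω α q N M u ↔
      ∃ U : Set E3, MeasurableSet U ∧ U ⊆ Ω ∧
        (volume U).toReal = (1 / 2) * (1 + m / n) * (volume Ω).toReal ∧
        ∀ᵐ x ∂(volume.restrict Ω),
          (x ∈ U → u x = ![Real.sqrt n, 0, 0]) ∧ (x ∉ U → u x = ![0, 0, Real.sqrt n]) := by
  rw [← measureReal_def] at hn hm
  have hΩfin : volume Ω ≠ ∞ := hΩb.measure_lt_top.ne
  have : IsFiniteMeasure (volume.restrict Ω) := isFiniteMeasure_restrict.mpr hΩfin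
  have hΩ : 0 < volume.real Ω := ENNReal.toReal_pos hΩpos.ne' hΩfin
  have hn₀ : 0 < n := hn ▸ div_pos hN hΩ
  obtain ⟨U₀, hU₀⟩ := exists_admissible_mixedState hΩm hΩb hΩ hN hM0 hMN
  rw [← hn] at hU₀
  rw [isMinimizer_iff_integral_tfExcess_eq_zero hΩfin n hαl.le hαu hq.le hU₀
    ((isMixedState_mixedState n U₀).integral_tfExcess hn₀.le α q) hu]
  constructor
  · intro hexcess
    obtain ⟨U, hUΩ, hU, hmixed⟩ := exists_isMixedState_of_ae hΩm hu.memL4.aemeasurable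
      (ae_eq_or_eq_of_integral_tfExcess_eq_zero hαl hαu hq hu.memL4 hu.nonneg hexcess)
    refine ⟨U, hU, hUΩ, ?_, hmixed⟩
    have hmag := hu.mag
    rw [hmixed.setIntegral_magnetization hΩfin hU hUΩ hn₀.le] at hmag
    change volume.real U = 1 / 2 * (1 + m / n) * volume.real Ω
    rw [hm, ← hmag]
    field_simp
    ring
  · rintro ⟨U, -, -, -, hmixed⟩
    exact IsMixedState.integral_tfExcess hmixed hn₀.le α q
end
end

section
/- Suppose α = 0, q < 0, and |M| ≤ N. Then an admissible u is a global minimizer of ∫_Ω H_TF if and only if u₀(x) = 0 and u₁(x)² + u₋₁(x)² = n for almost every x ∈ Ω. -/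
open MeasureTheory

noncomputable section

/-!
With `α = 0` and `ρ = u₁² + u₀² + u₋₁²`, the density splits as
`H_TF(u) = ½ (ρ - n)² - q u₀² + (n + q) ρ - n²/2`, so on admissible states the mass constraint
gives `∫ H_TF = q N + n N / 2 + E(u)`, where the excess
`E(u) = excessEnergy Ω q n u = ½ ∫ (ρ - n)² - q ∫ u₀²` is nonnegative and vanishes exactly when
`ρ = n` and `u₀ = 0` a.e. Since `|m| ≤ n`, the constant state `(√((n + m)/2), 0, √((n - m)/2))`
is admissible with zero excess, so the minimizers are exactly the admissible states of zero excess.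
-/

open ENNReal

instance holderTriple_four_four_two : HolderTriple 4 4 2 :=
  ⟨by rw [← ENNReal.add_halves (2 : ℝ≥0∞)⁻¹, ENNReal.div_eq_inv_mul,
    ← ENNReal.mul_inv (by simp) (by simp)]; norm_num⟩

namespace MeasureTheory.MemLp

variable {α : Type*} [MeasurableSpace α] {μ : Measure α}

lemma sq_of_four {f : α → ℝ} (hf : MemLp f 4 μ) : MemLp (fun x => f x ^ 2) 2 μ := by
  simpa only [sq] using hf.mul' hf

variable {v : α → Fin 3 → ℝ}

lemma memLp_two_density (hv : MemLp v 4 μ) :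
    MemLp (fun x => v x 0 ^ 2 + v x 1 ^ 2 + v x 2 ^ 2) 2 μ :=
  ((hv.eval 0).sq_of_four.add (hv.eval 1).sq_of_four).add (hv.eval 2).sq_of_four

variable [IsFiniteMeasure μ]

lemma integrable_sq_apply (hv : MemLp v 4 μ) (i : Fin 3) :
    Integrable (fun x => v x i ^ 2) μ :=
  (hv.eval i).sq_of_four.integrable one_le_two

lemma integrable_density (hv : MemLp v 4 μ) :
    Integrable (fun x => v x 0 ^ 2 + v x 1 ^ 2 + v x 2 ^ 2) μ :=
  hv.memLp_two_density.integrable one_le_two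

lemma integrable_density_sub_sq (hv : MemLp v 4 μ) (n : ℝ) :
    Integrable (fun x => (v x 0 ^ 2 + v x 1 ^ 2 + v x 2 ^ 2 - n) ^ 2) μ :=
  (hv.memLp_two_density.sub (memLp_const n)).integrable_sq

end MeasureTheory.MemLp

lemma HTF_zero_eq (q n : ℝ) (w : Fin 3 → ℝ) :
    HTF 0 q w = (1/2) * (w 0 ^ 2 + w 1 ^ 2 + w 2 ^ 2 - n) ^ 2 + (-q) * w 1 ^ 2
      + ((n + q) * (w 0 ^ 2 + w 1 ^ 2 + w 2 ^ 2) - n ^ 2 / 2) := by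
  simp only [HTF]; ring

def excessEnergy (Ω : Set E3) (q n : ℝ) (v : E3 → Fin 3 → ℝ) : ℝ :=
  (1/2) * (∫ x in Ω, (v x 0 ^ 2 + v x 1 ^ 2 + v x 2 ^ 2 - n) ^ 2)
    + (-q) * ∫ x in Ω, v x 1 ^ 2

section Energy

variable {Ω : Set E3} {q n N M : ℝ} {v : E3 → Fin 3 → ℝ}

lemma integral_HTF_zero (hΩ : volume Ω ≠ ∞) (hv : Admissible Ω N M v)
    (hnN : n * (volume Ω).toReal = N) :
    ∫ x in Ω, HTF 0 q (v x) = q * N + n * N / 2 + excessEnergy Ω q n v := by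
  have := isFiniteMeasure_restrict.mpr hΩ
  have I₁ := hv.memL4.integrable_density_sub_sq n
  have I₂ := hv.memL4.integrable_sq_apply 1
  have Iρ := hv.memL4.integrable_density
  simp_rw [HTF_zero_eq q n]
  rw [integral_add, integral_add, integral_sub, integral_const_mul, integral_const_mul,
    integral_const_mul, hv.mass, setIntegral_const, smul_eq_mul, measureReal_def, excessEnergy]
  · linear_combination (-n / 2) * hnN
  all_goals fun_prop

lemma excessEnergy_nonneg (hq : q ≤ 0) : 0 ≤ excessEnergy Ω q n v :=
  add_nonneg (mul_nonneg (by norm_num) (integral_nonneg fun _ => sq_nonneg _))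
    (mul_nonneg (neg_nonneg.mpr hq) (integral_nonneg fun _ => sq_nonneg _))

lemma excessEnergy_eq_zero_iff (hΩ : volume Ω ≠ ∞) (hq : q < 0)
    (hv : MemLp v 4 (volume.restrict Ω)) :
    excessEnergy Ω q n v = 0 ↔
      ∀ᵐ x ∂(volume.restrict Ω), v x 1 = 0 ∧ v x 0 ^ 2 + v x 2 ^ 2 = n := by
  have := isFiniteMeasure_restrict.mpr hΩ
  have zero_iff {f : E3 → ℝ} (hf : Integrable (fun x => f x ^ 2) (volume.restrict Ω))
      {c : ℝ} (hc : 0 < c) :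
      c * ∫ x in Ω, f x ^ 2 = 0 ↔ ∀ᵐ x ∂(volume.restrict Ω), f x = 0 := by
    rw [mul_eq_zero, or_iff_right hc.ne',
      integral_eq_zero_iff_of_nonneg (fun _ => sq_nonneg _) hf]
    simp only [Filter.EventuallyEq, Pi.zero_apply, sq_eq_zero_iff]
  rw [excessEnergy, add_eq_zero_iff_of_nonneg
      (mul_nonneg (by norm_num) (integral_nonneg fun _ => sq_nonneg _))
      (mul_nonneg (by linarith) (integral_nonneg fun _ => sq_nonneg _)),
    zero_iff (hv.integrable_density_sub_sq n) one_half_pos,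
    zero_iff (hv.integrable_sq_apply 1) (neg_pos.mpr hq), ← Filter.eventually_and]
  refine Filter.eventually_congr (Filter.Eventually.of_forall fun x => ?_)
  constructor
  · rintro ⟨hρ, h₁⟩
    exact ⟨h₁, by rw [h₁] at hρ; linarith⟩
  · rintro ⟨h₁, hρ⟩
    exact ⟨by rw [h₁]; linarith, h₁⟩

end Energy

lemma admissible_const {Ω : Set E3} (hΩ : volume Ω ≠ ∞) {a b : ℝ} (ha : 0 ≤ a) (hb : 0 ≤ b) :
    Admissible Ω ((a ^ 2 + b ^ 2) * (volume Ω).toReal) ((a ^ 2 - b ^ 2) * (volume Ω).toReal)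
      (fun _ => ![a, 0, b]) := by
  have := isFiniteMeasure_restrict.mpr hΩ
  refine ⟨memLp_const _, Filter.Eventually.of_forall fun _ i => ?_, ?_, ?_⟩
  · fin_cases i <;> simp [ha, hb]
  all_goals simp [measureReal_def, mul_comm]

lemma excessEnergy_const (Ω : Set E3) (q a b : ℝ) :
    excessEnergy Ω q (a ^ 2 + b ^ 2) (fun _ => ![a, 0, b]) = 0 := by
  simp [excessEnergy]

lemma exists_admissible_excessEnergy_eq_zero {Ω : Set E3} (hΩ : volume Ω ≠ ∞) (q : ℝ)
    {n m : ℝ} (hmn : |m| ≤ n) :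
    ∃ w, Admissible Ω (n * (volume Ω).toReal) (m * (volume Ω).toReal) w ∧
      excessEnergy Ω q n w = 0 := by
  obtain ⟨hmn₁, hmn₂⟩ := abs_le.mp hmn
  set a := √((n + m) / 2)
  set b := √((n - m) / 2)
  have ha : a ^ 2 = (n + m) / 2 := Real.sq_sqrt (by linarith)
  have hb : b ^ 2 = (n - m) / 2 := Real.sq_sqrt (by linarith)
  have hn : a ^ 2 + b ^ 2 = n := by rw [ha, hb]; ring
  have hm : a ^ 2 - b ^ 2 = m := by rw [ha, hb]; ring
  refine ⟨fun _ => ![a, 0, b], ?_, ?_⟩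
  · rw [← hn, ← hm]
    exact admissible_const hΩ (Real.sqrt_nonneg _) (Real.sqrt_nonneg _)
  · rw [← hn]
    exact excessEnergy_const Ω q a b

theorem alpha0_qneg_general
    (Ω : Set E3) (hΩb : Bornology.IsBounded Ω)
    (hΩpos : 0 < volume Ω)
    (α q N M n m : ℝ)
    (hn : n = N / (volume Ω).toReal) (hm : m = M / (volume Ω).toReal)
    (hα : α = 0) (hq : q < 0) (hM : |M| ≤ N)
    (u : E3 → Fin 3 → ℝ) (hu : Admissible Ω N M u) :
    IsMinimizer Ω α q N M u ↔
      ∀ᵐ x ∂(volume.restrict Ω), u x 1 = 0 ∧ u x 0 ^ 2 + u x 2 ^ 2 = n := by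
  subst hα
  have hΩ : volume Ω ≠ ∞ := hΩb.measure_lt_top.ne
  have hT : 0 < (volume Ω).toReal := ENNReal.toReal_pos hΩpos.ne' hΩ
  have hnN : n * (volume Ω).toReal = N := by rw [hn, div_mul_cancel₀ _ hT.ne']
  have hmM : m * (volume Ω).toReal = M := by rw [hm, div_mul_cancel₀ _ hT.ne']
  have hmn : |m| ≤ n := by rw [hn, hm, abs_div, abs_of_pos hT]; gcongr
  obtain ⟨w, hw, hw₀⟩ := exists_admissible_excessEnergy_eq_zero hΩ q hmn
  rw [hnN, hmM] at hw
  have energy {v} (hv : Admissible Ω N M v) := integral_HTF_zero (q := q) hΩ hv hnN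
  rw [← excessEnergy_eq_zero_iff hΩ hq hu.memL4]
  constructor
  · rintro ⟨-, hmin⟩
    have h := hmin w hw
    rw [energy hu, energy hw, hw₀] at h
    linarith [(excessEnergy_nonneg hq.le : 0 ≤ excessEnergy Ω q n u)]
  · intro hu₀
    refine ⟨hu, fun v hv => ?_⟩
    rw [energy hu, energy hv, hu₀]
    linarith [(excessEnergy_nonneg hq.le : 0 ≤ excessEnergy Ω q n v)]

/-- `α = 0`, `q < 0`: minimizers are exactly the functions with `u₀ = 0` and `u₁² + u₋₁² = n` a.e. -/
theorem alpha0_qneg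
    (Ω : Set E3) (hΩm : MeasurableSet Ω) (hΩb : Bornology.IsBounded Ω)
    (hΩpos : 0 < volume Ω)
    (α q N M n m : ℝ)
    (hN : 0 < N)
    (hn : n = N / (volume Ω).toReal) (hm : m = M / (volume Ω).toReal)
    (hα : α = 0) (hq : q < 0) (hM : |M| ≤ N)
    (u : E3 → Fin 3 → ℝ) (hu : Admissible Ω N M u) :
    IsMinimizer Ω α q N M u ↔
      ∀ᵐ x ∂(volume.restrict Ω), u x 1 = 0 ∧ u x 0 ^ 2 + u x 2 ^ 2 = n :=
  alpha0_qneg_general Ω hΩb hΩpos α q N M n m hn hm hα hq hM u hu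
end
end

section
/- Let W be an admissible double-well potential with wells a, b, fix ξ₀ ∈ [0,∞)³, and let φ(ξ) := g(ξ₀, ξ). Let Ω ⊆ ℝᵈ be a bounded open set and let u : Ω → [0,∞)³ be a bounded C¹ function with bounded derivative. Then φ∘u is differentiable almost everywhere on Ω and ∫_Ω |∇(φ∘u)(x)| dx ≤ ∫_Ω √(W(u(x)))·|∇u(x)| dx, where |∇u(x)| denotes the Frobenius (Hilbert–Schmidt) norm of the derivative of u at x. -/
/-! Concatenating a nearly optimal curve from `ξ₀` to `η` with the segment `[η, ξ]` shows
`|φ ξ - φ η| ≤ (sup of √W on [η, ξ]) * |ξ - η|` for `φ = g(ξ₀, ·)` on the orthant. Hence `φ ∘ u`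
is Lipschitz on the bounded set `Ω`, so differentiable a.e. by Rademacher, and letting `η → ξ = u x`
gives the pointwise bound `|∇(φ ∘ u)(x)| ≤ √W(u x) * ‖Du(x)‖ ≤ √W(u x) * |∇u(x)|`, which integrates
since the right-hand side is continuous on the compact closure of `Ω`. -/

open MeasureTheory Filter

noncomputable section

/-- The nonnegative orthant `[0,∞)³`. -/
def Orthant : Set E3 := {u | ∀ i, 0 ≤ u i}

/-- `W` is an admissible double-well potential with wells `a, b ∈ [0,∞)³`. -/
structure DoubleWell (a b : E3) (W : E3 → ℝ) : Prop where
  wells_ne : a ≠ b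
  wellA_mem : a ∈ Orthant
  wellB_mem : b ∈ Orthant
  nonneg : ∀ u, 0 ≤ W u
  smooth : ContDiff ℝ 1 W
  symm : ∀ (u : E3) (i : Fin 3), W (WithLp.toLp 2 (Function.update u i (-(u i)))) = W u
  zeros : ∀ u ∈ Orthant, (W u = 0 ↔ u = a ∨ u = b)
  quadA : ∃ δ > (0 : ℝ), ∃ C > (0 : ℝ), ∀ u : E3, ‖u - a‖ < δ →
    C * ‖u - a‖ ^ 2 ≤ W u ∧ W u ≤ C⁻¹ * ‖u - a‖ ^ 2
  quadB : ∃ δ > (0 : ℝ), ∃ C > (0 : ℝ), ∀ u : E3, ‖u - b‖ < δ →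
    C * ‖u - b‖ ^ 2 ≤ W u ∧ W u ≤ C⁻¹ * ‖u - b‖ ^ 2
  growth : ∃ C' > (0 : ℝ), ∃ R > (0 : ℝ), ∀ u : E3, ‖u‖ > R → C' * ‖u‖ ^ 2 ≤ W u

/-- `γ` is an admissible Lipschitz curve from `ξ₀` to `ξ₁` inside the orthant. -/
def IsCurve (ξ₀ ξ₁ : E3) (γ : ℝ → E3) : Prop :=
  (∃ K, LipschitzWith K γ) ∧ (∀ t ∈ Set.Icc (0 : ℝ) 1, γ t ∈ Orthant) ∧
    γ 0 = ξ₀ ∧ γ 1 = ξ₁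

/-- The degenerate-length of a curve with respect to the conformal metric `W ds²`. -/
def curveEnergy (W : E3 → ℝ) (γ : ℝ → E3) : ℝ :=
  ∫ t in (0 : ℝ)..1, Real.sqrt (W (γ t)) * ‖deriv γ t‖

/-- The degenerate geodesic distance induced by `W` on the orthant. -/
def geoDist (W : E3 → ℝ) (ξ₀ ξ₁ : E3) : ℝ :=
  sInf (curveEnergy W '' {γ | IsCurve ξ₀ ξ₁ γ})


/-- The Frobenius (Hilbert–Schmidt) norm of a linear map between Euclidean spaces. -/
def frob {d : ℕ} (T : EuclideanSpace ℝ (Fin d) →L[ℝ] E3) : ℝ :=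
  Real.sqrt (∑ j : Fin d, ‖T (EuclideanSpace.single j (1 : ℝ))‖ ^ 2)

open Topology Set
open scoped NNReal

section ConcatCurve

variable {E : Type*} [NormedAddCommGroup E]

/-- `γ` on `[0, 1/2]` followed by `σ` on `[1/2, 1]` when `γ 1 = σ 0`; clamping the parameters
keeps it Lipschitz on all of `ℝ`. -/
def concatCurve (γ σ : ℝ → E) : ℝ → E :=
  fun t => γ (min (2 * t) 1) + (σ (max (2 * t - 1) 0) - σ 0)

lemma concatCurve_of_le (γ σ : ℝ → E) {t : ℝ} (ht : t ≤ 1 / 2) :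
    concatCurve γ σ t = γ (2 * t) := by
  simp [concatCurve, min_eq_left (by linarith : 2 * t ≤ 1),
    max_eq_right (by linarith : 2 * t - 1 ≤ 0)]

lemma concatCurve_of_ge {γ σ : ℝ → E} (h : γ 1 = σ 0) {t : ℝ} (ht : 1 / 2 ≤ t) :
    concatCurve γ σ t = σ (2 * t - 1) := by
  simp [concatCurve, min_eq_right (by linarith : 1 ≤ 2 * t),
    max_eq_left (by linarith : 0 ≤ 2 * t - 1), h]

lemma LipschitzWith.concatCurve {γ σ : ℝ → E} {Kγ Kσ : ℝ≥0} (hγ : LipschitzWith Kγ γ)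
    (hσ : LipschitzWith Kσ σ) : LipschitzWith (2 * (Kγ + Kσ)) (concatCurve γ σ) := by
  have hdouble : ∀ c : ℝ, LipschitzWith 2 fun t : ℝ => 2 * t - c := fun c =>
    .of_dist_le_mul fun s t => by simp [Real.dist_eq, ← mul_sub, abs_mul]
  have h := (hγ.comp ((hdouble 0).min_const 1)).add
    ((hσ.comp ((hdouble 1).max_const 0)).sub (LipschitzWith.const (σ 0)))
  simp only [sub_zero, add_zero] at h
  rw [show 2 * (Kγ + Kσ) = Kγ * 2 + Kσ * 2 by ring]
  exact h

end ConcatCurve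

section Curves

variable {E : Type*} [NormedAddCommGroup E] [NormedSpace ℝ E]

def energyDensity (W : E → ℝ) (γ : ℝ → E) (t : ℝ) : ℝ := √(W (γ t)) * ‖deriv γ t‖

lemma energyDensity_nonneg (W : E → ℝ) (γ : ℝ → E) (t : ℝ) : 0 ≤ energyDensity W γ t :=
  mul_nonneg (Real.sqrt_nonneg _) (norm_nonneg _)

lemma LipschitzWith.intervalIntegrable_energyDensity [CompleteSpace E] {W : E → ℝ}
    (hW : Continuous W) {γ : ℝ → E} {K : ℝ≥0} (hγ : LipschitzWith K γ) (a b : ℝ) :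
    IntervalIntegrable (energyDensity W γ) volume a b := by
  have hderiv : IntervalIntegrable (fun t => ‖deriv γ t‖) volume a b :=
    (intervalIntegrable_const (c := (K : ℝ))).mono_fun
      (aestronglyMeasurable_deriv γ _).norm
      (Eventually.of_forall fun t => by simpa using norm_deriv_le_of_lipschitz hγ)
  exact hderiv.continuousOn_mul (Real.continuous_sqrt.comp (hW.comp hγ.continuous)).continuousOn

lemma integral_energyDensity_congr (W : E → ℝ) {γ σ : ℝ → E} {a b : ℝ} (hab : a ≤ b)
    (h : EqOn γ σ (Ioo a b)) :
    ∫ t in a..b, energyDensity W γ t = ∫ t in a..b, energyDensity W σ t := by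
  simp only [intervalIntegral.integral_of_le hab, integral_Ioc_eq_integral_Ioo]
  refine setIntegral_congr_fun measurableSet_Ioo fun t ht => ?_
  have hloc : γ =ᶠ[𝓝 t] σ := eventuallyEq_of_mem (isOpen_Ioo.mem_nhds ht) h
  simp only [energyDensity, h ht, hloc.deriv_eq]

lemma integral_energyDensity_comp_mul_sub (W : E → ℝ) (γ : ℝ → E) {c : ℝ} (hc : 0 < c)
    (a b d : ℝ) :
    ∫ t in a..b, energyDensity W (fun t => γ (c * t - d)) t =
      ∫ s in c * a - d..c * b - d, energyDensity W γ s := by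
  have hderiv : ∀ t, deriv (fun t => γ (c * t - d)) t = c • deriv γ (c * t - d) := fun t => by
    rw [deriv_comp_mul_left c (fun s => γ (s - d)), deriv_comp_sub_const]
  have hρ : ∀ t, energyDensity W (fun t => γ (c * t - d)) t =
      c * energyDensity W γ (c * t - d) := fun t => by
    rw [energyDensity, energyDensity, hderiv, norm_smul, Real.norm_of_nonneg hc.le]
    ring
  simp only [hρ, intervalIntegral.integral_const_mul,
    intervalIntegral.integral_comp_mul_sub (energyDensity W γ) hc.ne', smul_eq_mul,
    mul_inv_cancel_left₀ hc.ne']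

lemma integral_energyDensity_concatCurve [CompleteSpace E] {W : E → ℝ} (hW : Continuous W)
    {γ σ : ℝ → E} {Kγ Kσ : ℝ≥0} (hγ : LipschitzWith Kγ γ) (hσ : LipschitzWith Kσ σ)
    (h : γ 1 = σ 0) :
    ∫ t in (0 : ℝ)..1, energyDensity W (concatCurve γ σ) t =
      (∫ t in (0 : ℝ)..1, energyDensity W γ t) + ∫ t in (0 : ℝ)..1, energyDensity W σ t := by
  have hΓ := (hγ.concatCurve hσ).intervalIntegrable_energyDensity hW
  have hfirst := integral_energyDensity_comp_mul_sub W γ two_pos 0 (1 / 2) 0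
  have hsecond := integral_energyDensity_comp_mul_sub W σ two_pos (1 / 2) 1 1
  norm_num at hfirst hsecond
  rw [← intervalIntegral.integral_add_adjacent_intervals (hΓ 0 (1 / 2)) (hΓ (1 / 2) 1),
    integral_energyDensity_congr W (by norm_num) fun t ht => concatCurve_of_le γ σ ht.2.le,
    integral_energyDensity_congr W (by norm_num) fun t ht => concatCurve_of_ge h ht.1.le,
    hfirst, hsecond]

end Curves

lemma convex_orthant : Convex ℝ Orthant := by
  intro x hx y hy s t hs ht _ i
  simpa using add_nonneg (mul_nonneg hs (hx i)) (mul_nonneg ht (hy i))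

lemma IsCurve.concatCurve {ξ₀ η ξ : E3} {γ σ : ℝ → E3} (hγ : IsCurve ξ₀ η γ)
    (hσ : IsCurve η ξ σ) : IsCurve ξ₀ ξ (concatCurve γ σ) := by
  obtain ⟨⟨Kγ, hKγ⟩, hγmem, hγ0, hγ1⟩ := hγ
  obtain ⟨⟨Kσ, hKσ⟩, hσmem, hσ0, hσ1⟩ := hσ
  have hjoin : γ 1 = σ 0 := hγ1.trans hσ0.symm
  refine ⟨⟨_, hKγ.concatCurve hKσ⟩, fun t ht => ?_, ?_, ?_⟩
  · rcases le_total t (1 / 2) with h | h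
    · rw [concatCurve_of_le γ σ h]
      exact hγmem _ ⟨by linarith [ht.1], by linarith⟩
    · rw [concatCurve_of_ge hjoin h]
      exact hσmem _ ⟨by linarith, by linarith [ht.2]⟩
  · rw [concatCurve_of_le γ σ (by norm_num), mul_zero, hγ0]
  · rw [concatCurve_of_ge hjoin (by norm_num), mul_one, show (2 : ℝ) - 1 = 1 by norm_num, hσ1]

lemma curveEnergy_concatCurve {W : E3 → ℝ} (hW : Continuous W) {ξ₀ η ξ : E3}
    {γ σ : ℝ → E3} (hγ : IsCurve ξ₀ η γ) (hσ : IsCurve η ξ σ) :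
    curveEnergy W (concatCurve γ σ) = curveEnergy W γ + curveEnergy W σ :=
  integral_energyDensity_concatCurve hW hγ.1.choose_spec hσ.1.choose_spec
    (hγ.2.2.2.trans hσ.2.2.1.symm)

lemma isCurve_lineMap {η ξ : E3} (hη : η ∈ Orthant) (hξ : ξ ∈ Orthant) :
    IsCurve η ξ (AffineMap.lineMap η ξ) :=
  ⟨⟨_, lipschitzWith_lineMap η ξ⟩, fun _ ht => convex_orthant.lineMap_mem hη hξ ht,
    AffineMap.lineMap_apply_zero η ξ, AffineMap.lineMap_apply_one η ξ⟩

lemma curveEnergy_lineMap_le {W : E3 → ℝ} (hW : Continuous W) {η ξ : E3} {S : ℝ}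
    (hS : ∀ z ∈ segment ℝ η ξ, √(W z) ≤ S) :
    curveEnergy W (AffineMap.lineMap η ξ) ≤ S * ‖ξ - η‖ := by
  have hρ : ∀ t, energyDensity W (AffineMap.lineMap η ξ) t =
      √(W (AffineMap.lineMap η ξ t)) * ‖ξ - η‖ := fun t => by
    rw [energyDensity, AffineMap.hasDerivAt_lineMap.deriv]
  calc curveEnergy W (AffineMap.lineMap η ξ) ≤ ∫ _ in (0 : ℝ)..1, S * ‖ξ - η‖ :=
        intervalIntegral.integral_mono_on zero_le_one
          ((lipschitzWith_lineMap η ξ).intervalIntegrable_energyDensity hW 0 1)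
          intervalIntegrable_const fun t ht => (hρ t).trans_le <|
            mul_le_mul_of_nonneg_right (hS _ (lineMap_mem_segment ℝ η ξ ht)) (norm_nonneg _)
    _ = S * ‖ξ - η‖ := by simp

lemma geoDist_le_curveEnergy (W : E3 → ℝ) {ξ₀ ξ : E3} {γ : ℝ → E3} (hγ : IsCurve ξ₀ ξ γ) :
    geoDist W ξ₀ ξ ≤ curveEnergy W γ :=
  csInf_le ⟨0, by
    rintro _ ⟨σ, -, rfl⟩
    exact intervalIntegral.integral_nonneg zero_le_one fun t _ => energyDensity_nonneg W σ t⟩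
    ⟨γ, hγ, rfl⟩

lemma geoDist_le_add_curveEnergy {W : E3 → ℝ} (hW : Continuous W) {ξ₀ η ξ : E3}
    (hη : {γ | IsCurve ξ₀ η γ}.Nonempty) {σ : ℝ → E3} (hσ : IsCurve η ξ σ) :
    geoDist W ξ₀ ξ ≤ geoDist W ξ₀ η + curveEnergy W σ := by
  refine le_of_forall_pos_le_add fun ε hε => ?_
  obtain ⟨_, ⟨γ, hγ, rfl⟩, hγε⟩ := Real.lt_sInf_add_pos (hη.image (curveEnergy W)) hε
  calc geoDist W ξ₀ ξ ≤ curveEnergy W (concatCurve γ σ) :=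
        geoDist_le_curveEnergy W (hγ.concatCurve hσ)
    _ = curveEnergy W γ + curveEnergy W σ := curveEnergy_concatCurve hW hγ hσ
    _ ≤ geoDist W ξ₀ η + curveEnergy W σ + ε := by rw [geoDist]; linarith

lemma abs_geoDist_sub_le {W : E3 → ℝ} (hW : Continuous W) {ξ₀ η ξ : E3} (h₀ : ξ₀ ∈ Orthant)
    (hη : η ∈ Orthant) (hξ : ξ ∈ Orthant) {S : ℝ} (hS : ∀ z ∈ segment ℝ η ξ, √(W z) ≤ S) :
    |geoDist W ξ₀ ξ - geoDist W ξ₀ η| ≤ S * ‖ξ - η‖ := by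
  have hforth := geoDist_le_add_curveEnergy hW ⟨_, isCurve_lineMap h₀ hη⟩ (isCurve_lineMap hη hξ)
  have hback := geoDist_le_add_curveEnergy hW ⟨_, isCurve_lineMap h₀ hξ⟩ (isCurve_lineMap hξ hη)
  have hforth_seg := curveEnergy_lineMap_le hW hS
  have hback_seg := curveEnergy_lineMap_le hW fun z hz => hS z (segment_symm ℝ η ξ ▸ hz)
  rw [norm_sub_rev] at hback_seg
  exact abs_sub_le_iff.2 ⟨by linarith, by linarith⟩

lemma geoDist_lipschitzOnWith {W : E3 → ℝ} (hW : Continuous W) {ξ₀ : E3} (h₀ : ξ₀ ∈ Orthant)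
    {s : Set E3} (hs : Convex ℝ s) {M : ℝ≥0} (hM : ∀ z ∈ s, √(W z) ≤ M) :
    LipschitzOnWith M (geoDist W ξ₀) (Orthant ∩ s) :=
  LipschitzOnWith.of_dist_le_mul fun ξ hξ η hη => by
    rw [Real.dist_eq, dist_eq_norm]
    exact abs_geoDist_sub_le hW h₀ hη.1 hξ.1 fun z hz => hM z (hs.segment_subset hη.2 hξ.2 hz)

section FDeriv

variable {E F G : Type*} [NormedAddCommGroup E] [NormedSpace ℝ E] [NormedAddCommGroup F]
  [NormedSpace ℝ F] [NormedAddCommGroup G] [NormedSpace ℝ G]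

lemma HasFDerivAt.eventually_norm_sub_le {u : E → F} {A : E →L[ℝ] F} {x : E}
    (hu : HasFDerivAt u A x) {ε : ℝ} (hε : 0 < ε) :
    ∀ᶠ y in 𝓝 x, ‖u y - u x‖ ≤ (‖A‖ + ε) * ‖y - x‖ := by
  filter_upwards [hu.isLittleO.def hε] with y hy
  calc ‖u y - u x‖ ≤ ‖u y - u x - A (y - x)‖ + ‖A (y - x)‖ := norm_le_norm_sub_add _ _
    _ ≤ ε * ‖y - x‖ + ‖A‖ * ‖y - x‖ := add_le_add hy (A.le_opNorm _)
    _ = (‖A‖ + ε) * ‖y - x‖ := by ring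

lemma norm_fderiv_le_mul_of_forall_lt {f : E → G} {u : E → F} {x : E} {c : ℝ} (hc : 0 ≤ c)
    (hu : DifferentiableAt ℝ u x)
    (hf : ∀ c' > c, ∀ᶠ y in 𝓝 x, ‖f y - f x‖ ≤ c' * ‖u y - u x‖) :
    ‖fderiv ℝ f x‖ ≤ c * ‖fderiv ℝ u x‖ := by
  set B := ‖fderiv ℝ u x‖
  have hlim : Tendsto (fun ε : ℝ => (c + ε) * (B + ε)) (𝓝[>] 0) (𝓝 (c * B)) := by
    have hcont : Continuous fun ε : ℝ => (c + ε) * (B + ε) := by fun_prop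
    simpa using (hcont.tendsto 0).mono_left nhdsWithin_le_nhds
  refine ge_of_tendsto hlim (eventually_nhdsWithin_of_forall fun ε (hε : 0 < ε) => ?_)
  refine norm_fderiv_le_of_lip' ℝ (by positivity) ?_
  filter_upwards [hf (c + ε) (by linarith), hu.hasFDerivAt.eventually_norm_sub_le hε]
    with y hfy huy
  calc ‖f y - f x‖ ≤ (c + ε) * ‖u y - u x‖ := hfy
    _ ≤ (c + ε) * ((B + ε) * ‖y - x‖) := by gcongr
    _ = (c + ε) * (B + ε) * ‖y - x‖ := by ring

lemma norm_fderiv_geoDist_comp_le {W : E3 → ℝ} (hW : Continuous W) {ξ₀ : E3}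
    (h₀ : ξ₀ ∈ Orthant) {u : E → E3} {s : Set E} {x : E} (hs : s ∈ 𝓝 x)
    (hus : ∀ y ∈ s, u y ∈ Orthant) (hu : DifferentiableAt ℝ u x) :
    ‖fderiv ℝ (fun y => geoDist W ξ₀ (u y)) x‖ ≤ √(W (u x)) * ‖fderiv ℝ u x‖ := by
  refine norm_fderiv_le_mul_of_forall_lt (Real.sqrt_nonneg _) hu fun c hc => ?_
  obtain ⟨δ, hδ, hball⟩ := Metric.eventually_nhds_iff_ball.1
    ((Real.continuous_sqrt.comp hW).continuousAt.eventually (gt_mem_nhds hc))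
  filter_upwards [hs, hu.continuousAt.eventually (Metric.ball_mem_nhds _ hδ)] with y hy hyδ
  rw [Real.norm_eq_abs]
  exact abs_geoDist_sub_le hW h₀ (hus x (mem_of_mem_nhds hs)) (hus y hy) fun z hz =>
    (hball z ((convex_ball _ _).segment_subset (Metric.mem_ball_self hδ) hyδ hz)).le

lemma exists_lipschitzOnWith_geoDist_comp [ProperSpace E] {W : E3 → ℝ} (hW : Continuous W)
    {ξ₀ : E3} (h₀ : ξ₀ ∈ Orthant) {u : E → E3} (hu : ContDiff ℝ 1 u) {Ω : Set E}
    (hΩb : Bornology.IsBounded Ω) (hrange : ∀ x ∈ Ω, u x ∈ Orthant) :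
    ∃ K, LipschitzOnWith K (fun x => geoDist W ξ₀ (u x)) Ω := by
  obtain ⟨r, hΩr⟩ := hΩb.subset_closedBall 0
  obtain ⟨Ku, hKu⟩ := hu.contDiffOn.exists_lipschitzOnWith one_ne_zero (convex_closedBall 0 r)
    (isCompact_closedBall 0 r)
  obtain ⟨R, hR⟩ :=
    ((isCompact_closedBall 0 r).image hu.continuous).isBounded.subset_closedBall (0 : E3)
  obtain ⟨C, hC⟩ := (isCompact_closedBall (0 : E3) R).exists_bound_of_continuousOn
    (Real.continuous_sqrt.comp hW).continuousOn
  have hφ := geoDist_lipschitzOnWith hW h₀ (convex_closedBall 0 R) (M := C.toNNReal)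
    fun z hz => (le_abs_self _).trans ((hC z hz).trans (Real.le_coe_toNNReal C))
  exact ⟨_, hφ.comp (hKu.mono hΩr) fun x hx => ⟨hrange x hx, hR (mem_image_of_mem u (hΩr hx))⟩⟩

end FDeriv

lemma opNorm_le_frob {d : ℕ} (T : EuclideanSpace ℝ (Fin d) →L[ℝ] E3) : ‖T‖ ≤ frob T := by
  refine T.opNorm_le_bound (Real.sqrt_nonneg _) fun v => ?_
  have hv : T v = ∑ j, v j • T (EuclideanSpace.single j 1) := by
    conv_lhs => rw [← (EuclideanSpace.basisFun (Fin d) ℝ).sum_repr v]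
    simp
  calc ‖T v‖ ≤ ∑ j, ‖v j‖ * ‖T (EuclideanSpace.single j 1)‖ := by
        rw [hv]
        exact (norm_sum_le _ _).trans_eq (by simp only [norm_smul])
    _ ≤ √(∑ j, ‖v j‖ ^ 2) * frob T := Real.sum_mul_le_sqrt_mul_sqrt _ _ _
    _ = frob T * ‖v‖ := by rw [EuclideanSpace.norm_eq, mul_comm]

lemma continuous_frob {d : ℕ} :
    Continuous (frob : (EuclideanSpace ℝ (Fin d) →L[ℝ] E3) → ℝ) := by
  unfold frob
  fun_prop

theorem geoDist_comp_chain_rule_general (a b : E3) (W : E3 → ℝ) (hW : DoubleWell a b W)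
    (ξ₀ : E3) (hξ₀ : ξ₀ ∈ Orthant)
    (d : ℕ) (Ω : Set (EuclideanSpace ℝ (Fin d))) (hΩo : IsOpen Ω)
    (hΩb : Bornology.IsBounded Ω)
    (u : EuclideanSpace ℝ (Fin d) → E3) (hu : ContDiff ℝ 1 u)
    (hrange : ∀ x ∈ Ω, u x ∈ Orthant) :
    (∀ᵐ x ∂(volume.restrict Ω),
      DifferentiableAt ℝ (fun x' => geoDist W ξ₀ (u x')) x) ∧
    ∫ x in Ω, ‖fderiv ℝ (fun x' => geoDist W ξ₀ (u x')) x‖ ≤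
      ∫ x in Ω, Real.sqrt (W (u x)) * frob (fderiv ℝ u x) := by
  have hWc : Continuous W := hW.smooth.continuous
  obtain ⟨K, hLip⟩ := exists_lipschitzOnWith_geoDist_comp hWc hξ₀ hu hΩb hrange
  refine ⟨?_, ?_⟩
  · filter_upwards [hLip.ae_differentiableWithinAt hΩo.measurableSet,
      ae_restrict_mem hΩo.measurableSet] with x hx hxΩ
    exact hx.differentiableAt (hΩo.mem_nhds hxΩ)
  · have hint : IntegrableOn (fun x => √(W (u x)) * frob (fderiv ℝ u x)) Ω :=
      (((Real.continuous_sqrt.comp (hWc.comp hu.continuous)).mul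
        (continuous_frob.comp (hu.continuous_fderiv one_ne_zero))).continuousOn.integrableOn_compact
        hΩb.isCompact_closure).mono_set subset_closure
    refine integral_mono_of_nonneg (Eventually.of_forall fun x => norm_nonneg _) hint ?_
    filter_upwards [ae_restrict_mem hΩo.measurableSet] with x hx
    calc ‖fderiv ℝ (fun x' => geoDist W ξ₀ (u x')) x‖ ≤ √(W (u x)) * ‖fderiv ℝ u x‖ :=
          norm_fderiv_geoDist_comp_le hWc hξ₀ (hΩo.mem_nhds hx) hrange
            (hu.differentiable one_ne_zero x)
      _ ≤ √(W (u x)) * frob (fderiv ℝ u x) := by gcongr; exact opNorm_le_frob _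

/-- The chain-rule inequality `∫_Ω |∇(φ∘u)| ≤ ∫_Ω √(W(u)) |∇u|`. -/
theorem geoDist_comp_chain_rule (a b : E3) (W : E3 → ℝ) (hW : DoubleWell a b W)
    (ξ₀ : E3) (hξ₀ : ξ₀ ∈ Orthant)
    (d : ℕ) (Ω : Set (EuclideanSpace ℝ (Fin d))) (hΩo : IsOpen Ω)
    (hΩb : Bornology.IsBounded Ω)
    (u : EuclideanSpace ℝ (Fin d) → E3) (hu : ContDiff ℝ 1 u)
    (hrange : ∀ x ∈ Ω, u x ∈ Orthant)
    (hubd : ∃ Cu : ℝ, ∀ x ∈ Ω, ‖u x‖ ≤ Cu)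
    (hDbd : ∃ CD : ℝ, ∀ x ∈ Ω, ‖fderiv ℝ u x‖ ≤ CD) :
    (∀ᵐ x ∂(volume.restrict Ω),
      DifferentiableAt ℝ (fun x' => geoDist W ξ₀ (u x')) x) ∧
    ∫ x in Ω, ‖fderiv ℝ (fun x' => geoDist W ξ₀ (u x')) x‖ ≤
      ∫ x in Ω, Real.sqrt (W (u x)) * frob (fderiv ℝ u x) :=
  geoDist_comp_chain_rule_general a b W hW ξ₀ hξ₀ d Ω hΩo hΩb u hu hrange
end
end
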